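/- arXiv:2407.00479 — 2 statements merged into one kernel-verified Lean document; each statement's English description precedes it below -/
import Mathlib

section
/- (Rockafellar's surjectivity theorem.) Let E be a reflexive real Banach space and M a maximally monotone subset of B = E × E*. Then for every x* ∈ E* there exist x ∈ E and s*, j* ∈ E* such that (x, s*) ∈ M, ½‖x‖² + ½‖j*‖² = j*(x) (i.e. j* belongs to the duality map at x), and s* + j* = x*. -/
/-!
After replacing `M` by its translate `M - (0, x*)` it suffices to find `b ∈ M` with
`r(b) = ½‖b‖² + q(b) ≤ 0`: since `r ≥ 0` everywhere, `r(x, -j*) = 0` says exactly that `j* ∈ J x`.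
Let `φ(b) = sup_{m ∈ M} (q(b) - q(m - b))` be the Fitzpatrick function of `M`. If its epigraph
meets the open convex set `{(b, t) | t < -½‖b‖²}` at `(b, t)`, then `q(m - b) > r(b) ≥ 0` for all
`m ∈ M`, so `b ∈ M` by maximality and `r(b) ≤ 0`. Otherwise Hahn–Banach separates the two sets by
a functional `(w₁, w₂) ∈ E* × E**`; by reflexivity `w₂ = ŷ`, and since `½‖·‖²` is its own
Fenchel conjugate the point `d = (-y, -w₁)` satisfies `r(d) ≤ q(m - d)` for all `m ∈ M`, so
again `d ∈ M` and `r(d) ≤ 0`.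
-/

open NormedSpace

noncomputable section

variable (E : Type*) [NormedAddCommGroup E] [NormedSpace ℝ E]

/-- `B = E × E*`. -/
abbrev BSp := E × StrongDual ℝ E

/-- `B* = E* × E**`. -/
abbrev BStar := StrongDual ℝ E × StrongDual ℝ (StrongDual ℝ E)

/-- `q(x, x*) = ⟨x, x*⟩`. -/
def qB (b : BSp E) : ℝ := b.2 b.1

/-- `r(b) = ½‖b‖² + q(b)`, where `‖(x,x*)‖² = ‖x‖² + ‖x*‖²`. -/
def rB (b : BSp E) : ℝ := (‖b.1‖ ^ 2 + ‖b.2‖ ^ 2) / 2 + qB E b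

/-- `q̃(y*, y**) = ⟨y*, y**⟩`. -/
def qS (p : BStar E) : ℝ := p.2 p.1

/-- `r̃(b*) = ½‖b*‖² + q̃(b*)`. -/
def rS (p : BStar E) : ℝ := (‖p.1‖ ^ 2 + ‖p.2‖ ^ 2) / 2 + qS E p

/-- The isometry `L(y, y*) = (y*, ŷ)`. -/
def LMap (b : BSp E) : BStar E := (b.2, inclusionInDoubleDual ℝ E b.1)

/-- A subset of `B` is monotone. -/
def IsMonot (A : Set (BSp E)) : Prop := ∀ d ∈ A, ∀ e ∈ A, 0 ≤ qB E (d - e)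

/-- A subset of `B` is maximally monotone. -/
def IsMaxMonot (A : Set (BSp E)) : Prop :=
  IsMonot E A ∧ ∀ A' : Set (BSp E), IsMonot E A' → A ⊆ A' → A' = A

/-- A subset of `B*` is monotone. -/
def IsMonotStar (N : Set (BStar E)) : Prop := ∀ d ∈ N, ∀ e ∈ N, 0 ≤ qS E (d - e)

/-- A subset of `B*` is maximally monotone. -/
def IsMaxMonotStar (N : Set (BStar E)) : Prop :=
  IsMonotStar E N ∧ ∀ N' : Set (BStar E), IsMonotStar E N' → N ⊆ N' → N' = N

/-- `A` is quasidense: `inf_{a ∈ A} r(a - b) = 0` for every `b ∈ B`. -/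
def Quasidense (A : Set (BSp E)) : Prop :=
  ∀ b : BSp E, (⨅ a ∈ A, (rB E (a - b) : EReal)) = 0

/-- `P_M(b) = −inf_{m ∈ M} q(m − b)`, an extended real. -/
def PFn (M : Set (BSp E)) (b : BSp E) : EReal := -(⨅ m ∈ M, (qB E (m - b) : EReal))

/-- `F_M(b*) = −inf_{b ∈ B} [P_M(b) + q̃(b* − Lb)]`. -/
def FFn (M : Set (BSp E)) (p : BStar E) : EReal :=
  -(⨅ b : BSp E, (PFn E M b + (qS E (p - LMap E b) : EReal)))

/-- `G_M(b*) = −inf_{m ∈ M} q̃(Lm − b*)`. -/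
def GFn (M : Set (BSp E)) (p : BStar E) : EReal :=
  -(⨅ m ∈ M, (qS E (LMap E m - p) : EReal))

/-- The Gossez extension `M^♯ = {b* : G_M(b*) ≤ 0}`. -/
def Sharp (M : Set (BSp E)) : Set (BStar E) := {p | GFn E M p ≤ 0}

/-- `M` is of type (NI): `G_M ≥ 0` on `B*`. -/
def TypeNI (M : Set (BSp E)) : Prop := ∀ p : BStar E, 0 ≤ GFn E M p
theorem sq_opNorm_div_two_le_of_forall {V : Type*} [NormedAddCommGroup V] [NormedSpace ℝ V]
    (f : StrongDual ℝ V) {σ : ℝ} (h : ∀ x, f x - ‖x‖ ^ 2 / 2 ≤ σ) : ‖f‖ ^ 2 / 2 ≤ σ := by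
  have hσ : 0 ≤ σ := by simpa using h 0
  have hsq : ∀ x, f x ^ 2 ≤ 2 * σ * ‖x‖ ^ 2 := by
    intro x
    rcases eq_or_ne x 0 with rfl | hx
    · simp
    have hs := h ((f x / ‖x‖ ^ 2) • x)
    rw [map_smul, smul_eq_mul, norm_smul, Real.norm_eq_abs, mul_pow, sq_abs] at hs
    have hval : f x / ‖x‖ ^ 2 * f x - (f x / ‖x‖ ^ 2) ^ 2 * ‖x‖ ^ 2 / 2
        = f x ^ 2 / (2 * ‖x‖ ^ 2) := by
      field_simp
      ring
    rw [hval, div_le_iff₀ (by positivity)] at hs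
    linarith
  have hnorm : ‖f‖ ≤ √(2 * σ) := f.opNorm_le_bound (by positivity) fun x => by
    rw [Real.norm_eq_abs, ← Real.sqrt_sq_eq_abs, ← Real.sqrt_sq (norm_nonneg x),
      ← Real.sqrt_mul (by positivity)]
    exact Real.sqrt_le_sqrt (hsq x)
  have := pow_le_pow_left₀ (norm_nonneg f) hnorm 2
  rw [Real.sq_sqrt (by positivity)] at this
  linarith

theorem sq_opNorm_comp_inl_add_sq_opNorm_comp_inr_le {V W : Type*} [NormedAddCommGroup V]
    [NormedSpace ℝ V] [NormedAddCommGroup W] [NormedSpace ℝ W] (w : StrongDual ℝ (V × W))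
    {σ : ℝ} (h : ∀ b : V × W, w b - (‖b.1‖ ^ 2 + ‖b.2‖ ^ 2) / 2 ≤ σ) :
    ‖w.comp (.inl ℝ V W)‖ ^ 2 / 2 + ‖w.comp (.inr ℝ V W)‖ ^ 2 / 2 ≤ σ := by
  set w₁ := w.comp (.inl ℝ V W)
  set w₂ := w.comp (.inr ℝ V W)
  have h₁ : ∀ z, ‖w₁‖ ^ 2 / 2 + (w₂ z - ‖z‖ ^ 2 / 2) ≤ σ := fun z => by
    have := sq_opNorm_div_two_le_of_forall w₁ (σ := σ - (w₂ z - ‖z‖ ^ 2 / 2)) fun x => by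
      have := h (x, z)
      rw [← w.comp_inl_add_comp_inr] at this
      linarith
    linarith
  have := sq_opNorm_div_two_le_of_forall w₂ (σ := σ - ‖w₁‖ ^ 2 / 2) fun z => by linarith [h₁ z]
  linarith

theorem convexOn_univ_half_sq_norm_fst_add_sq_norm_snd {V W : Type*} [NormedAddCommGroup V]
    [NormedSpace ℝ V] [NormedAddCommGroup W] [NormedSpace ℝ W] :
    ConvexOn ℝ Set.univ fun b : V × W => (‖b.1‖ ^ 2 + ‖b.2‖ ^ 2) / 2 := by
  have hV : ConvexOn ℝ Set.univ fun x : V => ‖x‖ ^ 2 :=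
    convexOn_univ_norm.pow (fun x _ => norm_nonneg x) 2
  have hW : ConvexOn ℝ Set.univ fun x : W => ‖x‖ ^ 2 :=
    convexOn_univ_norm.pow (fun x _ => norm_nonneg x) 2
  simpa [div_eq_inv_mul] using ((hV.comp_linearMap (LinearMap.fst ℝ V W)).add
    (hW.comp_linearMap (LinearMap.snd ℝ V W))).smul (by norm_num : (0 : ℝ) ≤ 2⁻¹)

/-- Hahn–Banach in sandwich form: the affine function `v ↦ σ - w v` lies above `-g` and below
`C`. -/
theorem exists_dual_sub_le_of_disjoint {V : Type*} [NormedAddCommGroup V] [NormedSpace ℝ V]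
    {g : V → ℝ} (hg : ConvexOn ℝ Set.univ g) (hgc : Continuous g) {C : Set (V × ℝ)}
    (hC : Convex ℝ C) (hCne : C.Nonempty) (hCup : ∀ p ∈ C, ∀ t, p.2 ≤ t → (p.1, t) ∈ C)
    (hdisj : Disjoint {p : V × ℝ | p.2 + g p.1 < 0} C) :
    ∃ (w : StrongDual ℝ V) (σ : ℝ), (∀ v, w v - g v ≤ σ) ∧ ∀ p ∈ C, σ ≤ w p.1 + p.2 := by
  have hU : Convex ℝ {p : V × ℝ | p.2 + g p.1 < 0} := by
    simpa using ((LinearMap.snd ℝ V ℝ).convexOn convex_univ).add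
      (hg.comp_linearMap (LinearMap.fst ℝ V ℝ)) |>.convex_lt 0
  obtain ⟨f, u, hfU, hfC⟩ :=
    geometric_hahn_banach_open hU (isOpen_lt (by fun_prop) continuous_const) hC hdisj
  set w₀ := f.comp (.inl ℝ V ℝ)
  set c := f (0, 1)
  have hf : ∀ v t, f (v, t) = w₀ v + t * c := by
    intro v t
    rw [show ((v, t) : V × ℝ) = (v, 0) + t • (0, 1) by simp, map_add, map_smul, smul_eq_mul]
    rfl
  have hfU' : ∀ v t, t < -g v → w₀ v + t * c < u := fun v t ht =>
    hf v t ▸ hfU (v, t) (by simp only [Set.mem_ofPred_eq]; linarith)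
  have hc : 0 < c := by
    obtain ⟨p, hp⟩ := hCne
    have hlo := hfU' p.1 (-g p.1 - 1) (by linarith)
    have hhi := hf p.1 _ ▸ hfC _ (hCup p hp (max p.2 (-g p.1)) (le_max_left _ _))
    have hgap : 0 < max p.2 (-g p.1) - (-g p.1 - 1) := by linarith [le_max_right p.2 (-g p.1)]
    exact pos_of_mul_pos_right (by linarith : 0 < (max p.2 (-g p.1) - (-g p.1 - 1)) * c) hgap.le
  refine ⟨c⁻¹ • w₀, u / c, fun v => ?_, fun p hp => ?_⟩
  · have hlt : ∀ ε > 0, w₀ v - g v * c < u + ε := fun ε hε => by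
      have := hfU' v (-g v - ε / c) (by linarith [div_pos hε hc])
      rw [sub_mul, div_mul_cancel₀ _ hc.ne'] at this
      linarith
    rw [smul_apply, smul_eq_mul, le_div_iff₀ hc, sub_mul, mul_right_comm,
      inv_mul_cancel₀ hc.ne', one_mul]
    exact le_of_forall_pos_lt_add hlt
  · have := hf p.1 p.2 ▸ hfC p hp
    rw [smul_apply, smul_eq_mul, div_le_iff₀ hc, add_mul, mul_right_comm,
      inv_mul_cancel₀ hc.ne', one_mul]
    linarith

theorem qB_sub (d e : BSp E) : qB E (d - e) = qB E d - d.2 e.1 - e.2 d.1 + qB E e := by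
  simp only [qB, Prod.fst_sub, Prod.snd_sub, map_sub, sub_apply]
  ring

theorem qB_neg (b : BSp E) : qB E (-b) = qB E b := by
  simp [qB]

theorem rB_nonneg (b : BSp E) : 0 ≤ rB E b := by
  have h := b.2.le_opNorm b.1
  rw [Real.norm_eq_abs] at h
  unfold rB qB
  nlinarith [neg_abs_le (b.2 b.1), sq_nonneg (‖b.1‖ - ‖b.2‖)]

theorem IsMonot.preimage_add {A : Set (BSp E)} (hA : IsMonot E A) (b₀ : BSp E) :
    IsMonot E ((· + b₀) ⁻¹' A) := fun d hd e he => by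
  simpa only [add_sub_add_right_eq_sub] using hA _ hd _ he

theorem IsMaxMonot.preimage_add {M : Set (BSp E)} (hM : IsMaxMonot E M) (b₀ : BSp E) :
    IsMaxMonot E ((· + b₀) ⁻¹' M) := by
  refine ⟨hM.1.preimage_add E b₀, fun A hA hMA => ?_⟩
  have h := hM.2 _ (hA.preimage_add E (-b₀)) fun m hm => hMA (by simpa using hm)
  rw [← h]
  ext
  simp

theorem IsMaxMonot.mem_of_forall_qB_sub_nonneg {N : Set (BSp E)} (hN : IsMaxMonot E N)
    {d : BSp E} (hd : ∀ m ∈ N, 0 ≤ qB E (m - d)) : d ∈ N := by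
  have hmono : IsMonot E (insert d N) := by
    rintro a (rfl | ha) b (rfl | hb)
    · simp [qB]
    · simpa only [← neg_sub b a, qB_neg] using hd b hb
    · exact hd a ha
    · exact hN.1 a ha b hb
  exact hN.2 _ hmono (Set.subset_insert d N) ▸ Set.mem_insert d N

theorem IsMaxMonot.nonempty {N : Set (BSp E)} (hN : IsMaxMonot E N) : N.Nonempty := by
  refine Set.nonempty_iff_ne_empty.2 fun h => ?_
  simpa [h] using hN.mem_of_forall_qB_sub_nonneg E (d := 0) (by simp [h])

theorem IsMaxMonot.mem_and_rB_nonpos_of_forall_rB_le {N : Set (BSp E)} (hN : IsMaxMonot E N)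
    {d : BSp E} (hd : ∀ m ∈ N, rB E d ≤ qB E (m - d)) : d ∈ N ∧ rB E d ≤ 0 := by
  have hdN := hN.mem_of_forall_qB_sub_nonneg E fun m hm => (rB_nonneg E d).trans (hd m hm)
  exact ⟨hdN, by simpa [qB] using hd d hdN⟩

def fitzpatrickEpigraph (N : Set (BSp E)) : Set (BSp E × ℝ) :=
  {p | ∀ m ∈ N, m.2 p.1.1 + p.1.2 m.1 - p.2 ≤ qB E m}

theorem convex_fitzpatrickEpigraph (N : Set (BSp E)) : Convex ℝ (fitzpatrickEpigraph E N) := by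
  have hN : fitzpatrickEpigraph E N = ⋂ m ∈ N, {p | m.2 p.1.1 + p.1.2 m.1 - p.2 ≤ qB E m} := by
    ext
    simp [fitzpatrickEpigraph]
  rw [hN]
  refine convex_iInter₂ fun m _ => convex_halfSpace_le ⟨fun p q => ?_, fun c p => ?_⟩ _
  · simp only [Prod.fst_add, map_add, Prod.snd_add, add_apply]
    ring
  · simp only [Prod.smul_fst, map_smul, smul_eq_mul, Prod.smul_snd, smul_apply]
    ring

theorem IsMonot.mk_qB_mem_fitzpatrickEpigraph {N : Set (BSp E)} (hN : IsMonot E N) {m : BSp E}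
    (hm : m ∈ N) : (m, qB E m) ∈ fitzpatrickEpigraph E N := fun m' hm' => by
  have := hN m' hm' m hm
  rw [qB_sub] at this
  linarith

theorem IsMaxMonot.exists_mem_rB_nonpos
    (hrefl : Function.Surjective (inclusionInDoubleDual ℝ E))
    {N : Set (BSp E)} (hN : IsMaxMonot E N) : ∃ b ∈ N, rB E b ≤ 0 := by
  by_cases hdisj : Disjoint {p : BSp E × ℝ | p.2 + (‖p.1.1‖ ^ 2 + ‖p.1.2‖ ^ 2) / 2 < 0}
    (fitzpatrickEpigraph E N)
  · obtain ⟨m₀, hm₀⟩ := hN.nonempty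
    obtain ⟨w, σ, hw, hσ⟩ := exists_dual_sub_le_of_disjoint
      convexOn_univ_half_sq_norm_fst_add_sq_norm_snd (by fun_prop) (convex_fitzpatrickEpigraph E N)
      ⟨_, hN.1.mk_qB_mem_fitzpatrickEpigraph E hm₀⟩ (fun p hp t ht m hm => by linarith [hp m hm])
      hdisj
    have hσ_norm := sq_opNorm_comp_inl_add_sq_opNorm_comp_inr_le w hw
    obtain ⟨y, hy⟩ := hrefl (w.comp (.inr ℝ E (StrongDual ℝ E)))
    have hy_norm : ‖inclusionInDoubleDual ℝ E y‖ = ‖y‖ := (inclusionInDoubleDualLi ℝ).norm_map y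
    rw [← hy, hy_norm] at hσ_norm
    obtain ⟨hdN, hd⟩ := hN.mem_and_rB_nonpos_of_forall_rB_le E
      (d := (-y, -w.comp (.inl ℝ E (StrongDual ℝ E)))) fun m hm => by
        have := hσ _ (hN.1.mk_qB_mem_fitzpatrickEpigraph E hm)
        rw [← w.comp_inl_add_comp_inr, ← hy, dual_def] at this
        rw [rB, qB_sub]
        simp only [qB, norm_neg, neg_apply, map_neg, neg_neg, sub_neg_eq_add] at this ⊢
        linarith
    exact ⟨_, hdN, hd⟩
  · obtain ⟨p, hpU, hpC⟩ := Set.not_disjoint_iff.1 hdisj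
    obtain ⟨hpN, hp⟩ := hN.mem_and_rB_nonpos_of_forall_rB_le E (d := p.1) fun m hm => by
      have := hpC m hm
      simp only [Set.mem_ofPred_eq] at hpU
      rw [qB_sub, rB]
      linarith
    exact ⟨p.1, hpN, hp⟩

variable [CompleteSpace E] [Nontrivial E]

/-- Rockafellar's surjectivity theorem: if `E` is reflexive and `M`
is maximally monotone then `R(S + J) = E*`. -/
theorem rockafellar_surjectivity
    (hrefl : Function.Surjective (inclusionInDoubleDual ℝ E))
    (M : Set (BSp E)) (hM : IsMaxMonot E M) (xstar : StrongDual ℝ E) :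
    ∃ (x : E) (sstar jstar : StrongDual ℝ E), (x, sstar) ∈ M ∧
      ‖x‖ ^ 2 / 2 + ‖jstar‖ ^ 2 / 2 = jstar x ∧ sstar + jstar = xstar := by
  obtain ⟨⟨x, s⟩, hM', hr⟩ := (hM.preimage_add E (0, xstar)).exists_mem_rB_nonpos E hrefl
  refine ⟨x, s + xstar, -s, by simpa using hM', ?_, by abel⟩
  have hr₀ := rB_nonneg E (x, s)
  simp only [rB, qB] at hr hr₀
  rw [norm_neg, neg_apply]
  linarith
end
end

section
/- Let M be a maximally monotone subset of B that is quasidense (equivalently, of type (NI)), and let b* ∈ B*. Then the following eight conditions are equivalent: (a) G_M(b*) ≤ 0 (i.e. b* ∈ M^♯); (b) G_M(b*) = 0; (c) (G_M □ q̃)(b*) = 0; (d) (G_M □ q̃)(b*) ≥ 0; (e) F_M(b*) ≤ 0; (f) F_M(b*) = 0; (g) (F_M □ q̃)(b*) = 0; (h) (F_M □ q̃)(b*) ≥ 0. -/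
open NormedSpace

noncomputable section

variable (E : Type*) [NormedAddCommGroup E] [NormedSpace ℝ E]

variable [CompleteSpace E] [Nontrivial E]

/-!
Quasidensity gives type (NI): `L(B)` is `r̃`-dense in `B*` and
`q̃(Lm − w) ≤ r(m − b) + r̃(Lb − w)`, so `inf_{m ∈ M} q̃(Lm − w) ≤ 0` for every `w ∈ B*`.
Along a segment `c* + t (b* − c*)`, `q̃(Lm − ·)` is the convex combination of its end values plus
`(t² − t) q̃(b* − c*)`; with (NI) this makes `M^♯` monotone and, more sharply, gives `G_M □ q̃ ≥ 0`
on `M^♯`. As `P_M = G_M ∘ L` and `M` is monotone, `G_M ≤ F_M ≤ −(G_M □ q̃)`; these inequalities,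
together with `G_M ≥ 0` and `f □ q̃ ≤ f`, link all eight conditions.
-/

section Young

variable {F : Type*} [NormedAddCommGroup F] [NormedSpace ℝ F]

lemma apply_le_half_sq_add_half_sq (f : StrongDual ℝ F) (x : F) :
    f x ≤ (‖f‖ ^ 2 + ‖x‖ ^ 2) / 2 :=
  calc f x ≤ ‖f‖ * ‖x‖ := (le_abs_self _).trans (f.le_opNorm x)
    _ ≤ (‖f‖ ^ 2 + ‖x‖ ^ 2) / 2 := by nlinarith [sq_nonneg (‖f‖ - ‖x‖)]

lemma exists_half_sq_add_half_sq_sub_apply_lt (g : StrongDual ℝ F) {ε : ℝ} (hε : 0 < ε) :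
    ∃ u : F, (‖u‖ ^ 2 + ‖g‖ ^ 2) / 2 - g u < ε := by
  rcases eq_or_ne g 0 with rfl | hg
  · exact ⟨0, by simpa using hε⟩
  have hg0 : 0 < ‖g‖ := norm_pos_iff.2 hg
  have hξ : 0 < ε / ‖g‖ := div_pos hε hg0
  obtain ⟨x, hx1, hx2⟩ := g.exists_lt_apply_of_lt_opNorm (sub_lt_self ‖g‖ hξ)
  obtain ⟨y, hy1, hy2⟩ : ∃ y : F, ‖y‖ ≤ 1 ∧ ‖g‖ - ε / ‖g‖ < g y := by
    rcases le_total 0 (g x) with h | h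
    · exact ⟨x, hx1.le, by rwa [Real.norm_of_nonneg h] at hx2⟩
    · exact ⟨-x, by simpa using hx1.le, by rwa [Real.norm_of_nonpos h, ← map_neg] at hx2⟩
  refine ⟨‖g‖ • y, ?_⟩
  have hnorm : ‖‖g‖ • y‖ ≤ ‖g‖ := by
    rw [norm_smul, norm_norm]
    exact mul_le_of_le_one_right hg0.le hy1
  have happ : ‖g‖ * (‖g‖ - ε / ‖g‖) < g (‖g‖ • y) := by
    rw [map_smul, smul_eq_mul]
    exact mul_lt_mul_of_pos_left hy2 hg0
  have hsq : ‖g‖ * (‖g‖ - ε / ‖g‖) = ‖g‖ ^ 2 - ε := by field_simp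
  nlinarith [norm_nonneg (‖g‖ • y)]

end Young

section QuadraticForm

variable {E : Type*} [NormedAddCommGroup E] [NormedSpace ℝ E]

lemma qS_sub_comm (u v : BStar E) : qS E (u - v) = qS E (v - u) := by
  simp only [qS, Prod.fst_sub, Prod.snd_sub, sub_apply, map_sub]
  ring

lemma qS_sub_self (u : BStar E) : qS E (u - u) = 0 := by simp [qS]

lemma qS_LMap_sub_LMap (m b : BSp E) : qS E (LMap E m - LMap E b) = qB E (m - b) := by
  simp only [qS, qB, LMap, Prod.fst_sub, Prod.snd_sub, sub_apply, map_sub,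
    NormedSpace.dual_def]
  ring

lemma qS_sub_add_smul_sub (u p p' : BStar E) (t : ℝ) :
    qS E (u - (p' + t • (p - p'))) =
      (1 - t) * qS E (u - p') + t * qS E (u - p) + (t ^ 2 - t) * qS E (p - p') := by
  simp only [qS, Prod.fst_sub, Prod.snd_sub, Prod.smul_fst, Prod.smul_snd, Prod.fst_add,
    Prod.snd_add, sub_apply, add_apply, smul_apply, map_sub, map_add, map_smul, smul_eq_mul]
  ring

lemma qS_LMap_sub (m b : BSp E) (w : BStar E) :
    qS E (LMap E m - w) = qB E (m - b) + (LMap E b - w).1 (m - b).1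
      + (LMap E b - w).2 (m - b).2 + qS E (LMap E b - w) := by
  simp only [qS, qB, LMap, Prod.fst_sub, Prod.snd_sub, sub_apply, map_sub,
    NormedSpace.dual_def]
  ring

lemma qS_LMap_sub_le (m b : BSp E) (w : BStar E) :
    qS E (LMap E m - w) ≤ rB E (m - b) + rS E (LMap E b - w) := by
  rw [qS_LMap_sub m b w, rB, rS]
  linarith [apply_le_half_sq_add_half_sq (LMap E b - w).1 (m - b).1,
    apply_le_half_sq_add_half_sq (LMap E b - w).2 (m - b).2]

lemma exists_rS_LMap_sub_lt (w : BStar E) {ε : ℝ} (hε : 0 < ε) :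
    ∃ b : BSp E, rS E (LMap E b - w) < ε := by
  obtain ⟨u, hu⟩ := exists_half_sq_add_half_sq_sub_apply_lt w.2 hε
  refine ⟨(0, w.1 + u), ?_⟩
  have hLw : LMap E (0, w.1 + u) - w = (u, -w.2) := by
    simp only [LMap, map_zero]
    exact Prod.ext (add_sub_cancel_left _ _) (zero_sub w.2)
  rw [hLw, rS, qS]
  dsimp only
  rw [ContinuousLinearMap.opNorm_neg, neg_apply]
  linarith

end QuadraticForm

section GossezExtension

variable {E : Type*} [NormedAddCommGroup E] [NormedSpace ℝ E] {M : Set (BSp E)}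

/-- The inf-convolution `f □ q̃`. -/
def infConvQS (f : BStar E → EReal) (p : BStar E) : EReal :=
  ⨅ p' : BStar E, (f p' + (qS E (p - p') : EReal))

lemma infConvQS_le_self (f : BStar E → EReal) (p : BStar E) : infConvQS f p ≤ f p :=
  iInf_le_of_le p (by rw [qS_sub_self, EReal.coe_zero, add_zero])

lemma infConvQS_mono {f g : BStar E → EReal} (hfg : ∀ p, f p ≤ g p) (p : BStar E) :
    infConvQS f p ≤ infConvQS g p :=
  iInf_mono fun p' => add_le_add_left (hfg p') _

lemma mem_sharp_iff {p : BStar E} : p ∈ Sharp E M ↔ ∀ m ∈ M, 0 ≤ qS E (LMap E m - p) := by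
  simp only [Sharp, GFn, Set.mem_ofPred_eq, EReal.neg_le, neg_zero, le_iInf₂_iff,
    EReal.coe_nonneg]

lemma PFn_eq_GFn_LMap (b : BSp E) : PFn E M b = GFn E M (LMap E b) := by
  simp only [PFn, GFn, qS_LMap_sub_LMap]

lemma IsMonot.LMap_mem_sharp (hM : IsMonot E M) {m : BSp E} (hm : m ∈ M) :
    LMap E m ∈ Sharp E M :=
  mem_sharp_iff.2 fun m' hm' => (qS_LMap_sub_LMap m' m).symm ▸ hM m' hm' m hm

lemma GFn_le_FFn (hM : IsMonot E M) (p : BStar E) : GFn E M p ≤ FFn E M p := by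
  refine EReal.neg_le_neg_iff.2 (le_iInf₂ fun m hm => iInf_le_of_le m ?_)
  calc PFn E M m + (qS E (p - LMap E m) : EReal)
      ≤ 0 + (qS E (p - LMap E m) : EReal) := by
        rw [PFn_eq_GFn_LMap]
        exact add_le_add_left (hM.LMap_mem_sharp hm) _
    _ = qS E (LMap E m - p) := by rw [zero_add, qS_sub_comm]

lemma FFn_le_neg_infConvQS_GFn (p : BStar E) : FFn E M p ≤ -infConvQS (GFn E M) p := by
  simp only [FFn, PFn_eq_GFn_LMap, infConvQS, EReal.neg_le_neg_iff]
  exact le_iInf fun b => iInf_le _ (LMap E b)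

lemma mem_sharp_of_nonneg_infConvQS {f : BStar E → EReal} (hf : ∀ m ∈ M, f (LMap E m) ≤ 0)
    {p : BStar E} (hp : 0 ≤ infConvQS f p) : p ∈ Sharp E M := by
  refine mem_sharp_iff.2 fun m hm => EReal.coe_nonneg.1 ?_
  calc (0 : EReal) ≤ f (LMap E m) + (qS E (p - LMap E m) : EReal) := hp.trans (iInf_le _ _)
    _ ≤ 0 + (qS E (p - LMap E m) : EReal) := add_le_add_left (hf m hm) _
    _ = qS E (LMap E m - p) := by rw [zero_add, qS_sub_comm]

end GossezExtension

namespace Quasidense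

variable {E : Type*} [NormedAddCommGroup E] [NormedSpace ℝ E] {M : Set (BSp E)}

lemma exists_rB_sub_lt (hqd : Quasidense E M) (b : BSp E) {ε : ℝ} (hε : 0 < ε) :
    ∃ m ∈ M, rB E (m - b) < ε := by
  by_contra! h
  have hle : (ε : EReal) ≤ ⨅ m ∈ M, (rB E (m - b) : EReal) :=
    le_iInf₂ fun m hm => EReal.coe_le_coe_iff.2 (h m hm)
  rw [hqd b] at hle
  exact (EReal.coe_pos.2 hε).not_ge hle

lemma exists_qS_LMap_sub_lt (hqd : Quasidense E M) (w : BStar E) {ε : ℝ} (hε : 0 < ε) :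
    ∃ m ∈ M, qS E (LMap E m - w) < ε := by
  obtain ⟨b, hb⟩ := exists_rS_LMap_sub_lt w (half_pos hε)
  obtain ⟨m, hm, hmb⟩ := hqd.exists_rB_sub_lt b (half_pos hε)
  exact ⟨m, hm, by linarith [qS_LMap_sub_le m b w]⟩

lemma typeNI (hqd : Quasidense E M) : TypeNI E M := fun w =>
  EReal.neg_nonneg.2 <| EReal.le_of_forall_lt_iff_le.1 fun ε hε => by
    obtain ⟨m, hm, hlt⟩ := hqd.exists_qS_LMap_sub_lt w (EReal.coe_pos.1 hε)
    exact iInf₂_le_of_le m hm (EReal.coe_le_coe_iff.2 hlt.le)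

/-- At the midpoint `u` of `p` and `p'`, `q̃(Lm − u) ≥ −q̃(p − p') / 4` for every `m ∈ M`,
which (NI) at `u` rules out when `q̃(p − p') < 0`. -/
lemma isMonotStar_sharp (hqd : Quasidense E M) : IsMonotStar E (Sharp E M) := by
  intro p hp p' hp'
  by_contra! hneg
  obtain ⟨m, hm, hlt⟩ := hqd.exists_qS_LMap_sub_lt (p' + (2⁻¹ : ℝ) • (p - p'))
    (show 0 < -qS E (p - p') / 4 by linarith)
  have hmid := qS_sub_add_smul_sub (LMap E m) p p' 2⁻¹
  nlinarith [mem_sharp_iff.1 hp m hm, mem_sharp_iff.1 hp' m hm]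

/-- If `q̃(p − p') < g ≤ inf_m q̃(Lm − p')`, then `p' + t (p − p')` with `t = g / q̃(p − p')`
lies in `M^♯` and violates its monotonicity against `p`. -/
lemma le_qS_sub_of_mem_sharp (hqd : Quasidense E M) {p : BStar E} (hp : p ∈ Sharp E M)
    {p' : BStar E} {g : ℝ} (hg : ∀ m ∈ M, g ≤ qS E (LMap E m - p')) : g ≤ qS E (p - p') := by
  by_contra! hQ
  set Q := qS E (p - p')
  have hg0 : g ≤ 0 := by
    by_contra! hg0
    obtain ⟨m, hm, hlt⟩ := hqd.exists_qS_LMap_sub_lt p' hg0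
    exact (hg m hm).not_gt hlt
  have hQ0 : Q < 0 := hQ.trans_le hg0
  set t := g / Q
  have htQ : t * Q = g := div_mul_cancel₀ g hQ0.ne
  have ht0 : 0 ≤ t := div_nonneg_of_nonpos hg0 hQ0.le
  have ht1 : t < 1 := (div_lt_one_of_neg hQ0).2 hQ
  have hpt : p' + t • (p - p') ∈ Sharp E M := by
    refine mem_sharp_iff.2 fun m hm => ?_
    rw [qS_sub_add_smul_sub]
    nlinarith [mul_le_mul_of_nonneg_left (hg m hm) (sub_nonneg.2 ht1.le),
      mul_nonneg ht0 (mem_sharp_iff.1 hp m hm)]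
  have hmono := hqd.isMonotStar_sharp p hp _ hpt
  rw [qS_sub_add_smul_sub, qS_sub_self] at hmono
  nlinarith

lemma nonneg_infConvQS_GFn (hqd : Quasidense E M) {p : BStar E} (hp : p ∈ Sharp E M) :
    0 ≤ infConvQS (GFn E M) p := by
  refine le_iInf fun p' => ?_
  have hinf : ⨅ m ∈ M, (qS E (LMap E m - p') : EReal) ≤ qS E (p - p') :=
    EReal.ge_of_forall_gt_iff_ge.1 fun g hg => EReal.coe_le_coe_iff.2 <|
      hqd.le_qS_sub_of_mem_sharp hp fun m hm =>
        EReal.coe_le_coe_iff.1 (hg.le.trans (iInf₂_le m hm))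
  rw [GFn, add_comm, ← sub_eq_add_neg]
  exact (EReal.sub_nonneg (.inl (EReal.coe_ne_top _)) (.inl (EReal.coe_ne_bot _))).2 hinf

lemma FFn_nonpos_of_mem_sharp (hqd : Quasidense E M) {p : BStar E} (hp : p ∈ Sharp E M) :
    FFn E M p ≤ 0 :=
  (FFn_le_neg_infConvQS_GFn p).trans <|
    EReal.neg_le.1 (by simpa using hqd.nonneg_infConvQS_GFn hp)

end Quasidense

/-- for a quasidense maximally monotone `M` and `b* ∈ B*`, eight
conditions characterizing membership of the Gossez extension are equivalent. -/
theorem mem_sharp_tfae (M : Set (BSp E)) (hM : IsMaxMonot E M) (hqd : Quasidense E M)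
    (p : BStar E) :
    [GFn E M p ≤ 0,
     GFn E M p = 0,
     (⨅ p' : BStar E, (GFn E M p' + (qS E (p - p') : EReal))) = 0,
     0 ≤ ⨅ p' : BStar E, (GFn E M p' + (qS E (p - p') : EReal)),
     FFn E M p ≤ 0,
     FFn E M p = 0,
     (⨅ p' : BStar E, (FFn E M p' + (qS E (p - p') : EReal))) = 0,
     0 ≤ ⨅ p' : BStar E, (FFn E M p' + (qS E (p - p') : EReal))].TFAE := by
  have hGF := GFn_le_FFn hM.1
  tfae_have 1 → 2 := fun h => le_antisymm h (hqd.typeNI p)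
  tfae_have 2 → 1 := le_of_eq
  tfae_have 1 → 3 := fun h =>
    le_antisymm ((infConvQS_le_self _ p).trans h) (hqd.nonneg_infConvQS_GFn h)
  tfae_have 3 → 4 := ge_of_eq
  tfae_have 4 → 1 := mem_sharp_of_nonneg_infConvQS fun m hm => hM.1.LMap_mem_sharp hm
  tfae_have 1 → 6 := fun h =>
    le_antisymm (hqd.FFn_nonpos_of_mem_sharp h) ((hqd.typeNI p).trans (hGF p))
  tfae_have 6 → 5 := le_of_eq
  tfae_have 5 → 1 := (hGF p).trans
  tfae_have 4 → 8 := fun h => h.trans (infConvQS_mono hGF p)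
  tfae_have 8 → 1 := mem_sharp_of_nonneg_infConvQS fun m hm =>
    hqd.FFn_nonpos_of_mem_sharp (hM.1.LMap_mem_sharp hm)
  tfae_have 8 → 7 := fun h =>
    le_antisymm ((infConvQS_le_self _ p).trans (tfae_1_to_6 (tfae_8_to_1 h)).le) h
  tfae_have 7 → 8 := ge_of_eq
  tfae_finish
end
end
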